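/- Every n-expansion Lie algebra (L_•, ψ) satisfies dim_{F2} L_• ≤ n·2^{n−1} − 2^n + n + 1 (in particular L_• is finite-dimensional), and L_m = 0 for every m > n. -/

import Mathlib

/-!
Brackets lie in degrees `≥ 2`, so `ψ` maps `L₁` isomorphically onto `V`; let `b j ∈ L₁` lift
`e_j`. As `ker ψ = [L, L]` is abelian, `L_m = [L₁, L_{m-1}]` for `m ≥ 2`, so `L_m` is spanned by
the right-nested brackets of `m` of the `b j`. The axioms make such a bracket vanish as soon as an
index repeats (whence `L_m = 0` for `m > n`), and otherwise make it a function `W(A, y, z)` of its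
index set `A` and its innermost pair `{y, z}`. Jacobi gives `W(A, y, z) = W(A, x, z) + W(A, x, y)`,
so fixing a pivot `x ∈ A` leaves at most `|A| - 1` generators for each `A`, and
`dim L ≤ n + ∑_A (|A| - 1) = n·2^{n-1} - 2^n + n + 1`.
-/

abbrev F2 := ZMod 2

namespace HigherGenus

abbrev V (ι : Type) := ι → F2

abbrev ML (ι : Type) (i : ℕ) := MultilinearMap F2 (fun _ : Fin i => V ι) F2

variable {ι : Type} [Fintype ι] [DecidableEq ι]

/-- The tensor product of a family of linear functionals, as a multilinear map. -/
noncomputable def funcTensor {i : ℕ} (L : Fin i → (V ι →ₗ[F2] F2)) : ML ι i :=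
  (MultilinearMap.mkPiAlgebra F2 (Fin i) F2).compLinearMap L

/-- `χ_{h 1} ⊗ ⋯ ⊗ χ_{h i}` as a multilinear map. -/
noncomputable def chiTensor (i : ℕ) (h : Fin i → ι) : ML ι i :=
  funcTensor (fun p => LinearMap.proj (h p))

/-- The governing tensor `φ_{(A,x)}`: the sum of `χ_{τ(1)}⊗⋯⊗χ_{τ(i)}` over all bijections
`τ : [i] ≃ A` placing `x` in one of the last two positions. -/
noncomputable def govTensor (i : ℕ) (A : Finset ι) (x : ι) : ML ι i :=
  ∑ τ : Fin i ≃ {a // a ∈ A},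
    if ∀ p : Fin i, ((τ p : ι) = x → i ≤ (p : ℕ) + 2) then
      chiTensor i (fun p => (τ p : ι)) else 0

/-- `Gov(V_B, i)`: the span of the governing tensors supported in `B`. -/
noncomputable def Gov (i : ℕ) (B : Finset ι) : Submodule F2 (ML ι i) :=
  Submodule.span F2
    {φ | ∃ A : Finset ι, ∃ x : ι, A ⊆ B ∧ A.card = i ∧ x ∈ A ∧ φ = govTensor i A x}

/-- `Multi~(V_B, i)`: the span of the injective pure tensors supported in `B`. -/
noncomputable def MultiT (i : ℕ) (B : Finset ι) : Submodule F2 (ML ι i) :=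
  Submodule.span F2
    {φ | ∃ τ : Fin i → ι, Function.Injective τ ∧ (∀ p, τ p ∈ B) ∧ φ = chiTensor i τ}

/-- Evaluation of a multilinear map at a fixed tuple, as a linear map. -/
def mEval {i : ℕ} (σ : Fin i → V ι) : ML ι i →ₗ[F2] F2 where
  toFun b := b σ
  map_add' _ _ := rfl
  map_smul' _ _ := rfl

/-- Plugging the vector `v` into the first slot of a multilinear map. -/
noncomputable def consMapL {i : ℕ} (v : V ι) : ML ι (i + 1) →ₗ[F2] ML ι i :=
  (LinearMap.applyₗ v).comp
    (multilinearCurryLeftEquiv F2 (fun _ : Fin (i + 1) => V ι) F2).toLinearMap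

/-- The standard basis vector `e_j`. -/
def stdb (j : ι) : V ι := Pi.single j 1

/-- The recursively defined subspaces `Cons(V_B, i)`. -/
noncomputable def Cons : (i : ℕ) → Finset ι → Submodule F2 (ML ι i)
  | 0, _ => ⊥
  | 1, B => Gov 1 B
  | 2, B => MultiT 2 B ⊓
      (⨅ σ : Fin 2 → V ι, LinearMap.ker (mEval σ - mEval (σ ∘ (Equiv.swap 0 1))))
  | 3, B => (MultiT 3 B ⊓
      (⨅ j ∈ B, Submodule.comap (consMapL (stdb j)) (Cons 2 (B.erase j)))) ⊓
      (⨅ j₁ : ι, ⨅ j₂ : ι, ⨅ j₃ : ι,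
        LinearMap.ker (mEval ![stdb j₁, stdb j₂, stdb j₃]
          + mEval ![stdb j₃, stdb j₁, stdb j₂] + mEval ![stdb j₂, stdb j₃, stdb j₁]))
  | (i+4), B => (MultiT (i+4) B ⊓
      (⨅ j ∈ B, Submodule.comap (consMapL (stdb j)) (Cons (i+3) (B.erase j)))) ⊓
      (⨅ j₁ : ι, ⨅ j₂ : ι, ⨅ _ : j₁ ≠ j₂,
        LinearMap.ker ((consMapL (stdb j₂)).comp (consMapL (stdb j₁))
          - (consMapL (stdb j₁)).comp (consMapL (stdb j₂))))


/-- The right-nested bracket `[σ_1,[σ_2,[…,[σ_{i−1},σ_i]…]]]`. -/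
def nest {L : Type} [AddCommGroup L] [Module F2 L]
    (br : L →ₗ[F2] L →ₗ[F2] L) : {i : ℕ} → (Fin i → L) → L
  | 0, _ => 0
  | 1, σ => σ 0
  | (_+2), σ => br (σ 0) (nest br (Fin.tail σ))

/-- `(L_•, ψ)` (presented by a bracket `br`, graded pieces `piece m` for `m ≥ 1` with
`piece 0 = ⊥`, and `ψ`) is an expansion Lie algebra over the index set `ι`. -/
structure IsExpLie {ι : Type} [Fintype ι] [DecidableEq ι] {L : Type}
    [AddCommGroup L] [Module F2 L]
    (br : L →ₗ[F2] L →ₗ[F2] L) (piece : ℕ → Submodule F2 L)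
    (ψ : L →ₗ[F2] V ι) : Prop where
  /-- the grading starts in degree 1 -/
  piece_zero : piece 0 = ⊥
  /-- the graded pieces are independent … -/
  indep : iSupIndep piece
  /-- … and give a direct sum decomposition of `L` -/
  span_top : (⨆ m, piece m) = ⊤
  /-- `[L_h, L_k] ⊆ L_{h+k}` -/
  graded : ∀ h k : ℕ, ∀ x ∈ piece h, ∀ y ∈ piece k, br x y ∈ piece (h + k)
  /-- the bracket is alternating -/
  br_self : ∀ x, br x x = 0
  /-- the Jacobi identity -/
  jacobi : ∀ x y z, br x (br y z) + br y (br z x) + br z (br x y) = 0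
  /-- `ψ` is surjective -/
  psi_surj : Function.Surjective ψ
  /-- `ψ` is a homomorphism of graded Lie algebras: it kills brackets
  (the target has the zero bracket) … -/
  psi_br : ∀ x y, ψ (br x y) = 0
  /-- … and it kills every graded piece of degree `≠ 1`
  (the target is concentrated in degree 1) -/
  psi_graded : ∀ m : ℕ, m ≠ 1 → ∀ x ∈ piece m, ψ x = 0
  /-- `ker ψ` is an abelian subalgebra -/
  ker_abelian : ∀ x y, ψ x = 0 → ψ y = 0 → br x y = 0
  /-- `[L_•, L_•] = ker ψ` -/
  comm_eq_ker : Submodule.span F2 {z | ∃ x y, z = br x y} = LinearMap.ker ψ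
  /-- for `i ≥ 4`, nested brackets with entries in `L_1` are unchanged under any permutation
  of the first `i − 2` entries -/
  perm_invariant : ∀ (m : ℕ) (σ : Fin (m + 4) → L), (∀ p, σ p ∈ piece 1) →
    ∀ e : Equiv.Perm (Fin (m + 4)), (∀ p : Fin (m + 4), m + 2 ≤ (p : ℕ) → e p = p) →
    nest br (σ ∘ e) = nest br σ
  /-- for `i ≥ 4`, nested brackets with entries in `L_1` vanish as soon as two of the first
  `i − 2` entries coincide -/
  repeat_vanish : ∀ (m : ℕ) (σ : Fin (m + 4) → L), (∀ p, σ p ∈ piece 1) →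
    (∃ s t : Fin (m + 4), s ≠ t ∧ (s : ℕ) < m + 2 ∧ (t : ℕ) < m + 2 ∧ σ s = σ t) →
    nest br σ = 0
  /-- `[τ_1,[τ_1,τ_2]] = 0` for `τ_1, τ_2 ∈ L_1` with `ψ(τ_1)` a standard basis vector -/
  basis_bracket_sq : ∀ x y : L, x ∈ piece 1 → y ∈ piece 1 →
    (∃ j : ι, ψ x = stdb j) → br x (br x y) = 0

/-- A bundled expansion Lie algebra over the index set `ι`. -/
structure ExpLieAlg (ι : Type) [Fintype ι] [DecidableEq ι] where
  L : Type
  [acg : AddCommGroup L]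
  [mod : Module F2 L]
  br : L →ₗ[F2] L →ₗ[F2] L
  piece : ℕ → Submodule F2 L
  psi : L →ₗ[F2] V ι
  isexp : IsExpLie br piece psi

attribute [instance] ExpLieAlg.acg ExpLieAlg.mod

/-- A homomorphism of expansion Lie algebras: a linear map commuting with the brackets,
preserving the gradings, and compatible with the structure maps `ψ`. -/
def IsExpLieHom {ι : Type} [Fintype ι] [DecidableEq ι] (E E' : ExpLieAlg ι)
    (f : E.L →ₗ[F2] E'.L) : Prop :=
  (∀ x y, f (E.br x y) = E'.br (f x) (f y)) ∧
  (∀ m : ℕ, ∀ x ∈ E.piece m, f x ∈ E'.piece m) ∧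
  (∀ x, E'.psi (f x) = E.psi x)

end HigherGenus

theorem iSupIndep.inf_iSup_le_iSup_fiber {α κ ι : Type*} [CompleteLattice α]
    [IsModularLattice α] {p : κ → α} (hp : iSupIndep p) {q : ι → α} {deg : ι → κ}
    (hq : ∀ i, q i ≤ p (deg i)) (k : κ) :
    p k ⊓ ⨆ i, q i ≤ ⨆ (i) (_ : deg i = k), q i := by
  set a := ⨆ (i) (_ : deg i = k), q i
  have ha : a ≤ p k := iSup₂_le fun i hi => hi ▸ hq i
  have hsplit : ⨆ i, q i ≤ a ⊔ ⨆ (j) (_ : j ≠ k), p j := iSup_le fun i => by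
    by_cases hi : deg i = k
    · exact le_sup_of_le_left (le_iSup₂_of_le i hi le_rfl)
    · exact le_sup_of_le_right (le_iSup₂_of_le (deg i) hi (hq i))
  calc p k ⊓ ⨆ i, q i ≤ p k ⊓ (a ⊔ ⨆ (j) (_ : j ≠ k), p j) := inf_le_inf_left _ hsplit
    _ = a ⊔ p k ⊓ ⨆ (j) (_ : j ≠ k), p j := by
      rw [inf_comm, sup_inf_assoc_of_le _ ha, inf_comm (p k)]
    _ = a := by rw [(hp k).eq_bot, sup_bot_eq]

theorem Finset.sum_card_sub_one_add_two_pow (α : Type*) [Fintype α] :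
    ∑ A : Finset α, (A.card - 1) + 2 ^ Fintype.card α
      = Fintype.card α * 2 ^ (Fintype.card α - 1) + 1 := by
  classical
  have hsum : ∑ A : Finset α, A.card = Fintype.card α * 2 ^ (Fintype.card α - 1) := by
    rw [← Finset.powerset_univ, Finset.sum_powerset_apply_card (fun k => k), Finset.card_univ,
      ← Nat.sum_range_mul_choose]
    simp only [smul_eq_mul, mul_comm]
  have hterm (A : Finset α) : A.card - 1 + 1 = A.card + if A = ∅ then 1 else 0 := by
    rcases A.eq_empty_or_nonempty with rfl | h
    · simp
    · simp [h.ne_empty, Nat.sub_add_cancel h.card_pos]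
  calc ∑ A : Finset α, (A.card - 1) + 2 ^ Fintype.card α
      = ∑ A : Finset α, (A.card - 1 + 1) := by
        rw [Finset.sum_add_distrib, Finset.sum_const, Finset.card_univ, Fintype.card_finset,
          smul_eq_mul, mul_one]
    _ = ∑ A : Finset α, A.card + 1 := by
        rw [Finset.sum_congr rfl fun A _ => hterm A, Finset.sum_add_distrib,
          Finset.sum_ite_eq' Finset.univ ∅ fun _ => 1, if_pos (Finset.mem_univ _)]
    _ = _ := by rw [hsum]

namespace HigherGenus

variable {L : Type} [AddCommGroup L] [Module F2 L] {br : L →ₗ[F2] L →ₗ[F2] L}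
  {piece : ℕ → Submodule F2 L}

variable (br piece) in
def IsIteratedBracket (v : L) : Prop :=
  ∃ (m : ℕ) (τ : Fin (m + 2) → L), (∀ p, τ p ∈ piece 1) ∧ nest br τ = v

theorem isIteratedBracket_br {x y : L} (hx : x ∈ piece 1) (hy : y ∈ piece 1) :
    IsIteratedBracket br piece (br x y) :=
  ⟨0, ![x, y], fun p => by fin_cases p <;> assumption, rfl⟩

theorem IsIteratedBracket.br_left {x v : L} (hv : IsIteratedBracket br piece v)
    (hx : x ∈ piece 1) : IsIteratedBracket br piece (br x v) := by
  obtain ⟨m, τ, hτ, rfl⟩ := hv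
  exact ⟨m + 1, Fin.cons x τ, Fin.cases hx hτ, rfl⟩

theorem IsIteratedBracket.prod_apply {v : L} (hv : IsIteratedBracket br piece v) {l : List L}
    (hl : ∀ x ∈ l, x ∈ piece 1) : IsIteratedBracket br piece ((l.map br).prod v) := by
  induction l with
  | nil => simpa
  | cons x l ih =>
    simp only [List.map_cons, List.prod_cons, Module.End.mul_apply]
    exact (ih fun y hy => hl y (List.mem_cons_of_mem x hy)).br_left (hl x List.mem_cons_self)

theorem prod_map_append_singleton_apply (l : List L) (x v : L) :
    ((l ++ [x]).map br).prod v = (l.map br).prod (br x v) := by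
  simp [List.prod_append]

section

variable {ι : Type} {b : ι → L}

variable (br b) in
/-- `((l.map b).map br).prod (b z)` is the right-nested bracket
`[b l₁, [b l₂, …, [b lₖ, b z]…]]`. -/
def nestSpan (m : ℕ) : Submodule F2 L :=
  Submodule.span F2
    {v | ∃ (l : List ι) (z : ι), l.length + 1 = m ∧ ((l.map b).map br).prod (b z) = v}

theorem map₂_span_range_nestSpan_le (k : ℕ) :
    (Submodule.span F2 (Set.range b)).map₂ br (nestSpan br b k) ≤ nestSpan br b (k + 1) := by
  rw [nestSpan, Submodule.map₂_span_span, Submodule.span_le]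
  rintro _ ⟨_, ⟨i, rfl⟩, _, ⟨l, z, hl, rfl⟩, rfl⟩
  exact Submodule.subset_span ⟨i :: l, z, by simp [hl], by simp⟩

variable [DecidableEq ι]

variable (br b) in
/-- The entries outside the innermost pair come in the arbitrary order of `Finset.toList`, which
does not matter by `IsExpLie.prod_apply_eq_of_perm`. -/
noncomputable def setBracket (A : Finset ι) (y z : ι) : L :=
  ((((A.erase y).erase z).toList.map b).map br).prod (br (b y) (b z))

variable [Fintype ι]

variable (br b) in
open Classical in
noncomputable def bracketGens : Finset L :=
  Finset.univ.image b ∪ Finset.univ.biUnion fun A : Finset ι =>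
    if h : A.Nonempty then (A.erase h.choose).image (setBracket br b A h.choose) else ∅

variable (br b) in
theorem card_bracketGens_le :
    (bracketGens br b).card ≤ Fintype.card ι + ∑ A : Finset ι, (A.card - 1) := by
  classical
  refine (Finset.card_union_le _ _).trans (add_le_add (Finset.card_image_le.trans (by simp))
    (Finset.card_biUnion_le.trans (Finset.sum_le_sum fun A _ => ?_)))
  split_ifs with h
  · exact Finset.card_image_le.trans (Finset.card_erase_of_mem h.choose_spec).le
  · simp

variable {ψ : L →ₗ[F2] V ι}

namespace IsExpLie

theorem br_comm (hE : IsExpLie br piece ψ) (x y : L) : br x y = br y x := by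
  have h := hE.br_self (x + y)
  simp only [map_add, LinearMap.add_apply, hE.br_self, zero_add, add_zero] at h
  rw [← sub_eq_zero, ZModModule.sub_eq_add, add_comm, h]

theorem br_br_eq (hE : IsExpLie br piece ψ) (x y z : L) :
    br x (br y z) = br y (br x z) + br z (br x y) := by
  have h := hE.jacobi x y z
  rw [hE.br_comm z x, add_assoc] at h
  rw [eq_neg_of_add_eq_zero_left h, ZModModule.neg_eq_self]

theorem piece_inf_ker_le (hE : IsExpLie br piece ψ) (m : ℕ) :
    piece m ⊓ LinearMap.ker ψ ≤
      ⨆ (d : ℕ × ℕ) (_ : d.1 + d.2 = m), (piece d.1).map₂ br (piece d.2) := by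
  have hker : LinearMap.ker ψ = ⨆ d : ℕ × ℕ, (piece d.1).map₂ br (piece d.2) := by
    rw [← hE.comm_eq_ker, iSup_prod]
    simp_rw [← Submodule.map₂_iSup_right, ← Submodule.map₂_iSup_left, hE.span_top,
      Submodule.map₂_eq_span_image2]
    congr 1
    ext z
    simp [eq_comm]
  rw [hker]
  exact hE.indep.inf_iSup_le_iSup_fiber
    (fun d => Submodule.map₂_le.mpr fun x hx y hy => hE.graded _ _ x hx y hy) m

theorem disjoint_piece_one_ker (hE : IsExpLie br piece ψ) :
    Disjoint (piece 1) (LinearMap.ker ψ) := by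
  refine disjoint_iff.mpr (eq_bot_iff.mpr ((hE.piece_inf_ker_le 1).trans (iSup₂_le ?_)))
  rintro ⟨_ | _, _ | _⟩ h <;> first | omega | simp [hE.piece_zero]

theorem piece_le_iSup_map₂ (hE : IsExpLie br piece ψ) {m : ℕ} (hm : m ≠ 1) :
    piece m ≤ ⨆ (d : ℕ × ℕ) (_ : d.1 + d.2 = m), (piece d.1).map₂ br (piece d.2) :=
  (le_inf le_rfl fun x hx => hE.psi_graded m hm x hx).trans (hE.piece_inf_ker_le m)

theorem map_piece_one (hE : IsExpLie br piece ψ) : (piece 1).map ψ = ⊤ := by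
  rw [eq_top_iff, ← LinearMap.range_eq_top.mpr hE.psi_surj, LinearMap.range_eq_map,
    ← hE.span_top, Submodule.map_iSup]
  refine iSup_le fun m => ?_
  rcases eq_or_ne m 1 with rfl | hm
  · exact le_rfl
  · rintro _ ⟨x, hx, rfl⟩
    rw [hE.psi_graded m hm x hx]
    exact zero_mem _

theorem exists_lift (hE : IsExpLie br piece ψ) :
    ∃ b : ι → L, (∀ j, b j ∈ piece 1) ∧ ∀ j, ψ (b j) = stdb j := by
  have h (j : ι) : stdb j ∈ (piece 1).map ψ := hE.map_piece_one ▸ Submodule.mem_top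
  choose b hb1 hbψ using h
  exact ⟨b, hb1, hbψ⟩

theorem piece_one_le_span (hE : IsExpLie br piece ψ) (hb1 : ∀ j, b j ∈ piece 1)
    (hbψ : ∀ j, ψ (b j) = stdb j) : piece 1 ≤ Submodule.span F2 (Set.range b) := by
  intro x hx
  set y := ∑ j, ψ x j • b j
  have hy1 : y ∈ piece 1 := Submodule.sum_mem _ fun j _ => Submodule.smul_mem _ _ (hb1 j)
  have hψy : ψ y = ψ x := by
    simp only [y, map_sum, map_smul, hbψ, stdb]
    ext i
    simp [Finset.sum_apply, Pi.single_apply]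
  have hxy : x - y = 0 :=
    Submodule.disjoint_def.mp hE.disjoint_piece_one_ker _ (sub_mem hx hy1) (by simp [hψy])
  rw [sub_eq_zero.mp hxy]
  exact Submodule.sum_mem _ fun j _ => Submodule.smul_mem _ _ (Submodule.subset_span ⟨j, rfl⟩)

theorem br_br_comm (hE : IsExpLie br piece ψ) {x y v : L} (hx : x ∈ piece 1)
    (hy : y ∈ piece 1) (hv : IsIteratedBracket br piece v) :
    br x (br y v) = br y (br x v) := by
  obtain ⟨m, τ, hτ, rfl⟩ := hv
  have hswap : (Fin.cons x (Fin.cons y τ) : Fin (m + 4) → L) ∘ Equiv.swap 0 1 =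
      Fin.cons y (Fin.cons x τ) := by
    ext p
    rcases Fin.eq_zero_or_eq_succ p with rfl | ⟨p, rfl⟩
    · simp
    rcases Fin.eq_zero_or_eq_succ p with rfl | ⟨p, rfl⟩
    · simp
    · simp [Equiv.swap_apply_of_ne_of_ne (Fin.succ_ne_zero _) (Fin.succ_succ_ne_one _)]
  have hσ : ∀ p, (Fin.cons x (Fin.cons y τ) : Fin (m + 4) → L) p ∈ piece 1 :=
    Fin.cases hx (Fin.cases hy hτ : ∀ p, (Fin.cons y τ : Fin (m + 3) → L) p ∈ piece 1)
  have hperm := hE.perm_invariant m _ hσ (Equiv.swap 0 1)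
    fun p hp => Equiv.swap_apply_of_ne_of_ne (by rintro rfl; simp at hp)
      (by rintro rfl; simp at hp)
  rw [hswap] at hperm
  exact hperm.symm

theorem br_br_self (hE : IsExpLie br piece ψ) {x v : L} (hx : x ∈ piece 1)
    (hv : IsIteratedBracket br piece v) : br x (br x v) = 0 := by
  obtain ⟨m, τ, hτ, rfl⟩ := hv
  exact hE.repeat_vanish m (Fin.cons x (Fin.cons x τ))
    (Fin.cases hx (Fin.cases hx hτ : ∀ p, (Fin.cons x τ : Fin (m + 3) → L) p ∈ piece 1))
    ⟨0, 1, by simp, by simp, by simp, rfl⟩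

theorem prod_apply_eq_of_perm (hE : IsExpLie br piece ψ) {l₁ l₂ : List L} (h : l₁.Perm l₂)
    (hl : ∀ x ∈ l₁, x ∈ piece 1) {v : L} (hv : IsIteratedBracket br piece v) :
    (l₁.map br).prod v = (l₂.map br).prod v := by
  induction h with
  | nil => rfl
  | cons x _ ih =>
    simp only [List.map_cons, List.prod_cons, Module.End.mul_apply,
      ih fun y hy => hl y (List.mem_cons_of_mem x hy)]
  | swap x y l =>
    simp only [List.map_cons, List.prod_cons, Module.End.mul_apply]
    simp only [List.mem_cons, forall_eq_or_imp] at hl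
    exact hE.br_br_comm hl.1 hl.2.1 (hv.prod_apply hl.2.2)
  | trans h₁ _ ih₁ ih₂ =>
    exact (ih₁ hl).trans (ih₂ fun y hy => hl y (h₁.mem_iff.mpr hy))

theorem prod_apply_eq_zero_of_mem (hE : IsExpLie br piece ψ) {l : List L} {w v : L}
    (hw : w ∈ l) (hl : ∀ x ∈ l, x ∈ piece 1) (hv : IsIteratedBracket br piece v)
    (h : br w v = 0) : (l.map br).prod v = 0 := by
  classical
  have hperm : l.Perm (l.erase w ++ [w]) :=
    (List.perm_cons_erase hw).trans (List.perm_append_singleton w _).symm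
  rw [hE.prod_apply_eq_of_perm hperm hl hv, prod_map_append_singleton_apply, h, map_zero]

theorem prod_apply_eq_zero_of_not_nodup (hE : IsExpLie br piece ψ) {l : List L}
    (h : ¬ l.Nodup) (hl : ∀ x ∈ l, x ∈ piece 1) {v : L} (hv : IsIteratedBracket br piece v) :
    (l.map br).prod v = 0 := by
  obtain ⟨x, hx⟩ : ∃ x, [x, x].Sublist l := by simpa [List.nodup_iff_sublist] using h
  obtain ⟨l', hl'⟩ := hx.exists_perm_append
  have hx1 : x ∈ piece 1 := hl x (hx.subset List.mem_cons_self)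
  rw [hE.prod_apply_eq_of_perm hl' hl hv]
  simp only [List.cons_append, List.nil_append, List.map_cons, List.prod_cons,
    Module.End.mul_apply]
  exact hE.br_br_self hx1 (hv.prod_apply fun y hy => hl y (hl'.mem_iff.mpr (by simp [hy])))

theorem prod_map_apply_eq_zero (hE : IsExpLie br piece ψ) (hb1 : ∀ j, b j ∈ piece 1)
    (hbψ : ∀ j, ψ (b j) = stdb j) {l : List ι} {y z : ι} (h : ¬ (l ++ [y, z]).Nodup) :
    ((l.map b).map br).prod (br (b y) (b z)) = 0 := by
  have hv := isIteratedBracket_br (br := br) (hb1 y) (hb1 z)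
  have hl : ∀ x ∈ l.map b, x ∈ piece 1 := by simp [hb1]
  have hsq (j k : ι) : br (b j) (br (b j) (b k)) = 0 :=
    hE.basis_bracket_sq _ _ (hb1 j) (hb1 k) ⟨j, hbψ j⟩
  by_cases hnd : l.Nodup
  swap
  · exact hE.prod_apply_eq_zero_of_not_nodup (fun h' => hnd (h'.of_map b)) hl hv
  by_cases hyz : y = z
  · simp [hyz, hE.br_self]
  obtain ⟨x, hx, rfl | rfl⟩ : ∃ x ∈ l, x = y ∨ x = z := by
    simpa [List.nodup_append, hnd, hyz, or_iff_not_imp_left] using h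
  · exact hE.prod_apply_eq_zero_of_mem (List.mem_map_of_mem hx) hl hv (hsq x z)
  · exact hE.prod_apply_eq_zero_of_mem (List.mem_map_of_mem hx) hl hv
      (by rw [hE.br_comm (b y)]; exact hsq x y)

theorem piece_le_nestSpan (hE : IsExpLie br piece ψ) (hb1 : ∀ j, b j ∈ piece 1)
    (hbψ : ∀ j, ψ (b j) = stdb j) (m : ℕ) : piece m ≤ nestSpan br b m := by
  induction m using Nat.strong_induction_on with
  | _ m ih =>
  rcases m with _ | _ | m
  · simp [hE.piece_zero]
  · refine (hE.piece_one_le_span hb1 hbψ).trans (Submodule.span_mono ?_)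
    rintro _ ⟨j, rfl⟩
    exact ⟨[], j, rfl, rfl⟩
  have hbr_flip : br.flip = br := LinearMap.ext₂ fun x y => hE.br_comm y x
  have hdeg_one (k : ℕ) (hk : k + 1 = m + 2) :
      (piece 1).map₂ br (piece k) ≤ nestSpan br b (m + 2) :=
    hk ▸ (Submodule.map₂_le_map₂ (hE.piece_one_le_span hb1 hbψ) (ih k (by omega))).trans
      (map₂_span_range_nestSpan_le k)
  refine (hE.piece_le_iSup_map₂ (by omega)).trans (iSup₂_le fun ⟨h, k⟩ hhk => ?_)
  dsimp only at hhk ⊢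
  rcases (by omega : h = 0 ∨ k = 0 ∨ h = 1 ∨ k = 1 ∨ (h ≠ 1 ∧ k ≠ 1)) with
    rfl | rfl | rfl | rfl | ⟨hh, hk⟩
  · simp [hE.piece_zero]
  · simp [hE.piece_zero]
  · exact hdeg_one k (by omega)
  · rw [← Submodule.map₂_flip, hbr_flip]
    exact hdeg_one h hhk
  · refine Submodule.map₂_le.mpr fun x hx y hy => ?_
    rw [hE.ker_abelian x y (hE.psi_graded h hh x hx) (hE.psi_graded k hk y hy)]
    exact zero_mem _

theorem nestSpan_eq_bot (hE : IsExpLie br piece ψ) (hb1 : ∀ j, b j ∈ piece 1)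
    (hbψ : ∀ j, ψ (b j) = stdb j) {m : ℕ} (hm : Fintype.card ι < m) :
    nestSpan br b m = ⊥ := by
  refine Submodule.span_eq_bot.mpr ?_
  rintro _ ⟨l, z, hlen, rfl⟩
  rcases l.eq_nil_or_concat' with rfl | ⟨l, y, rfl⟩
  · have := Fintype.card_pos_iff.mpr ⟨z⟩
    simp only [List.length_nil, zero_add] at hlen
    omega
  · rw [List.map_append, List.map_singleton, prod_map_append_singleton_apply]
    refine hE.prod_map_apply_eq_zero hb1 hbψ fun hnd => ?_
    have := hnd.length_le_card
    simp only [List.length_append, List.length_cons, List.length_nil] at this hlen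
    omega

theorem prod_map_apply_eq_setBracket (hE : IsExpLie br piece ψ) (hb1 : ∀ j, b j ∈ piece 1)
    {A : Finset ι} {l : List ι} {y z : ι} (hl : l.Nodup)
    (hmem : ∀ a, a ∈ l ↔ a ∈ A ∧ a ≠ y ∧ a ≠ z) :
    ((l.map b).map br).prod (br (b y) (b z)) = setBracket br b A y z := by
  refine hE.prod_apply_eq_of_perm (List.Perm.map b ?_) (by simp [hb1])
    (isIteratedBracket_br (hb1 y) (hb1 z))
  refine (List.perm_ext_iff_of_nodup hl (Finset.nodup_toList _)).mpr fun a => ?_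
  simp only [hmem, Finset.mem_toList, Finset.mem_erase]
  tauto

theorem setBracket_comm (hE : IsExpLie br piece ψ) (A : Finset ι) (y z : ι) :
    setBracket br b A y z = setBracket br b A z y := by
  rw [setBracket, setBracket, Finset.erase_right_comm, hE.br_comm]

theorem setBracket_eq_add (hE : IsExpLie br piece ψ) (hb1 : ∀ j, b j ∈ piece 1)
    {A : Finset ι} {x y z : ι} (hx : x ∈ A) (hy : y ∈ A) (hz : z ∈ A) (hxy : x ≠ y)
    (hxz : x ≠ z) (hyz : y ≠ z) :
    setBracket br b A y z = setBracket br b A x z + setBracket br b A x y := by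
  obtain ⟨s, hs, hsmem⟩ :
      ∃ s : List ι, s.Nodup ∧ ∀ a, a ∈ s ↔ a ∈ A ∧ a ≠ x ∧ a ≠ y ∧ a ≠ z :=
    ⟨(((A.erase x).erase y).erase z).toList, Finset.nodup_toList _,
      fun a => by simp only [Finset.mem_toList, Finset.mem_erase]; tauto⟩
  have key (u v w : ι) (hmem : ∀ a, a ∈ s ++ [w] ↔ a ∈ A ∧ a ≠ u ∧ a ≠ v)
      (hw : w = x ∨ w = y ∨ w = z) :
      setBracket br b A u v = ((s.map b).map br).prod (br (b w) (br (b u) (b v))) := by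
    have hws : w ∉ s := by rw [hsmem]; tauto
    rw [← hE.prod_map_apply_eq_setBracket hb1
      (hs.append (List.nodup_singleton w) (by simpa using hws)) hmem, List.map_append,
      List.map_singleton, prod_map_append_singleton_apply]
  rw [key y z x _ (by tauto), key x z y _ (by tauto), key x y z _ (by tauto), hE.br_br_eq,
    map_add]
  all_goals
    intro a
    rw [List.mem_append, List.mem_singleton, hsmem]
    rcases eq_or_ne a x with rfl | hax <;> rcases eq_or_ne a y with rfl | hay <;>
      rcases eq_or_ne a z with rfl | haz <;> simp_all

theorem setBracket_mem_span (hE : IsExpLie br piece ψ) (hb1 : ∀ j, b j ∈ piece 1)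
    {A : Finset ι} {y z : ι} (hy : y ∈ A) (hz : z ∈ A) (hyz : y ≠ z) :
    setBracket br b A y z ∈ Submodule.span F2 (bracketGens br b : Set L) := by
  classical
  have hA : A.Nonempty := ⟨y, hy⟩
  set a := hA.choose
  have ha : a ∈ A := hA.choose_spec
  have hgen (w : ι) (hw : w ∈ A) (hwa : w ≠ a) :
      setBracket br b A a w ∈ Submodule.span F2 (bracketGens br b : Set L) := by
    refine Submodule.subset_span (Finset.mem_union_right _
      (Finset.mem_biUnion.mpr ⟨A, Finset.mem_univ _, ?_⟩))
    rw [dif_pos hA]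
    exact Finset.mem_image_of_mem _ (Finset.mem_erase.mpr ⟨hwa, hw⟩)
  by_cases hya : y = a
  · exact hya ▸ hgen z hz (hya ▸ hyz).symm
  by_cases hza : z = a
  · rw [hE.setBracket_comm, hza]
    exact hgen y hy hya
  rw [hE.setBracket_eq_add hb1 ha hy hz (Ne.symm hya) (Ne.symm hza) hyz]
  exact add_mem (hgen z hz hza) (hgen y hy hya)

theorem span_bracketGens (hE : IsExpLie br piece ψ) (hb1 : ∀ j, b j ∈ piece 1)
    (hbψ : ∀ j, ψ (b j) = stdb j) : Submodule.span F2 (bracketGens br b : Set L) = ⊤ := by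
  classical
  rw [eq_top_iff, ← hE.span_top]
  refine iSup_le fun m => (hE.piece_le_nestSpan hb1 hbψ m).trans (Submodule.span_le.mpr ?_)
  rintro _ ⟨l, z, -, rfl⟩
  rcases l.eq_nil_or_concat' with rfl | ⟨l, y, rfl⟩
  · exact Submodule.subset_span
      (Finset.mem_union_left _ (Finset.mem_image_of_mem b (Finset.mem_univ z)))
  rw [List.map_append, List.map_singleton, prod_map_append_singleton_apply]
  by_cases hnd : (l ++ [y, z]).Nodup
  · obtain ⟨hl, hyz, hlyz⟩ : l.Nodup ∧ y ≠ z ∧ ∀ a ∈ l, a ≠ y ∧ a ≠ z := by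
      simpa [List.nodup_append] using hnd
    rw [hE.prod_map_apply_eq_setBracket hb1 (A := (l ++ [y, z]).toFinset) hl fun a => ?_]
    · exact hE.setBracket_mem_span hb1 (by simp) (by simp) hyz
    · have := hlyz a
      simp only [List.mem_toFinset, List.mem_append, List.mem_cons, List.not_mem_nil]
      tauto
  · rw [hE.prod_map_apply_eq_zero hb1 hbψ hnd]
    exact zero_mem _

theorem finiteDimensional (hE : IsExpLie br piece ψ) : FiniteDimensional F2 L := by
  obtain ⟨b, hb1, hbψ⟩ := hE.exists_lift
  exact ⟨⟨bracketGens br b, hE.span_bracketGens hb1 hbψ⟩⟩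

theorem finrank_add_two_pow_le (hE : IsExpLie br piece ψ) :
    Module.finrank F2 L + 2 ^ Fintype.card ι ≤
      Fintype.card ι * 2 ^ (Fintype.card ι - 1) + Fintype.card ι + 1 := by
  obtain ⟨b, hb1, hbψ⟩ := hE.exists_lift
  have hrank : Module.finrank F2 L ≤ (bracketGens br b).card := by
    rw [← finrank_top, ← hE.span_bracketGens hb1 hbψ]
    exact finrank_span_finset_le_card _
  have hcard := card_bracketGens_le br b
  have hsum := Finset.sum_card_sub_one_add_two_pow ι
  omega

theorem piece_eq_bot (hE : IsExpLie br piece ψ) {m : ℕ} (hm : Fintype.card ι < m) :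
    piece m = ⊥ := by
  obtain ⟨b, hb1, hbψ⟩ := hE.exists_lift
  exact eq_bot_iff.mpr ((hE.piece_le_nestSpan hb1 hbψ m).trans (hE.nestSpan_eq_bot hb1 hbψ hm).le)

end IsExpLie

end

theorem statement8_general (n : ℕ) (E : ExpLieAlg (Fin n)) :
    FiniteDimensional F2 E.L ∧
    Module.finrank F2 E.L + 2 ^ n ≤ n * 2 ^ (n - 1) + n + 1 ∧
    (∀ m : ℕ, n < m → E.piece m = ⊥) := by
  have hE := E.isexp
  refine ⟨hE.finiteDimensional, ?_, fun m hm => hE.piece_eq_bot ?_⟩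
  · simpa using hE.finrank_add_two_pow_le
  · simpa using hm

/-- Every `n`-expansion Lie algebra is finite dimensional, of dimension at most
`n·2^{n−1} − 2^n + n + 1` (stated without ℕ-truncation as
`dim L + 2^n ≤ n·2^{n−1} + n + 1`), and its graded pieces vanish in degrees `m > n`. -/
theorem statement8 (n : ℕ) (hn : 1 ≤ n) (E : ExpLieAlg (Fin n)) :
    FiniteDimensional F2 E.L ∧
    Module.finrank F2 E.L + 2 ^ n ≤ n * 2 ^ (n - 1) + n + 1 ∧
    (∀ m : ℕ, n < m → E.piece m = ⊥) :=
  statement8_general n E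

end HigherGenus
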